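/- Let (G,M,I) be a finite context with ∅'' = ∅, let z ∈ G and H = G ∖ {z}, let π□ be the finest extent partition of (G,M,I), let z^□□ be the class of π□ containing z, and let E be a box extent of the subcontext (H, M, I ∩ (H×M)). Then: (i) E is a box extent of (G,M,I) if and only if z^□□ ∩ E'' = ∅, where E'' is computed in (G,M,I); (ii) E ∪ {z} is a box extent of (G,M,I) if and only if z^□□ ∖ {z} ⊆ E and (E ∪ {z})'' = E ∪ {z}, where the double prime is computed in (G,M,I). -/
import Mathlib


open Set

variable {G M : Type*}

/-- The attribute-derivation `A'` of a set of objects (the restricted relation of a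
subcontext agrees with `I` on its object set, so no restriction is needed here). -/
def polarUp (I : G → M → Prop) (A : Set G) : Set M := {m | ∀ g ∈ A, I g m}

/-- The object-derivation `B'` of a set of attributes, computed in the subcontext whose
object set is `H` (relation `I ∩ H×M`). -/
def polarDown (I : G → M → Prop) (H : Set G) (B : Set M) : Set G :=
  {g | g ∈ H ∧ ∀ m ∈ B, I g m}

/-- The closure `A''` computed in the subcontext with object set `H`.
Taking `H = Set.univ` gives the closure in the full context `(G,M,I)`. -/
def cl2 (I : G → M → Prop) (H A : Set G) : Set G := polarDown I H (polarUp I A)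

/-- `A` is an extent of the subcontext with object set `H`. -/
def IsExtent (I : G → M → Prop) (H A : Set G) : Prop := A ⊆ H ∧ cl2 I H A = A

/-- An extent partition of the subcontext with object set `H`: a partition of `H`
all of whose classes are extents. -/
def IsExtentPartition (I : G → M → Prop) (H : Set G) (π : Set (Set G)) : Prop :=
  (∀ A ∈ π, A.Nonempty) ∧ π.Pairwise Disjoint ∧ ⋃₀ π = H ∧ ∀ A ∈ π, IsExtent I H A

/-- `E` is a box extent of the subcontext with object set `H`: a class of some extent
partition, or `∅''`. -/
def IsBoxExtent (I : G → M → Prop) (H E : Set G) : Prop :=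
  (∃ π : Set (Set G), IsExtentPartition I H π ∧ E ∈ π) ∨ E = cl2 I H ∅

/-- The finest extent partition: every class of every extent partition is a union of
its classes. -/
def IsFinestExtentPartition (I : G → M → Prop) (H : Set G) (π : Set (Set G)) : Prop :=
  IsExtentPartition I H π ∧
    ∀ σ : Set (Set G), IsExtentPartition I H σ → ∀ A ∈ σ, ∃ S ⊆ π, A = ⋃₀ S

/-- A classification tree in the box extent lattice of the subcontext with object set
`H`: a set of nonempty box extents such that for every nonempty box extent `X`,
`{E ∈ T | X ⊆ E}` is a nonempty chain under inclusion. -/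
def IsBoxClassTree (I : G → M → Prop) (H : Set G) (T : Set (Set G)) : Prop :=
  (∀ E ∈ T, E.Nonempty ∧ IsBoxExtent I H E) ∧
  ∀ X : Set G, X.Nonempty → IsBoxExtent I H X →
    ({E ∈ T | X ⊆ E}.Nonempty ∧ IsChain (· ⊆ ·) {E ∈ T | X ⊆ E})

/-- A maximal classification tree in the box extent lattice. -/
def IsMaxBoxClassTree (I : G → M → Prop) (H : Set G) (T : Set (Set G)) : Prop :=
  IsBoxClassTree I H T ∧ ∀ T' : Set (Set G), IsBoxClassTree I H T' → T ⊆ T' → T' = T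


section Aux

variable {G M : Type*} (I : G → M → Prop)

lemma polarUp_anti {A B : Set G} (h : A ⊆ B) : polarUp I B ⊆ polarUp I A :=
  fun m hm g hg => hm g (h hg)

lemma subset_cl2 {H A : Set G} (hA : A ⊆ H) : A ⊆ cl2 I H A :=
  fun g hg => ⟨hA hg, fun m hm => hm g hg⟩

lemma cl2_mono {H A B : Set G} (h : A ⊆ B) : cl2 I H A ⊆ cl2 I H B :=
  fun g hg => ⟨hg.1, fun m hm => hg.2 m (polarUp_anti I h hm)⟩

lemma cl2_eq_inter (H A : Set G) : cl2 I H A = cl2 I Set.univ A ∩ H := by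
  ext g
  simp only [cl2, polarDown, Set.mem_setOf_eq, Set.mem_inter_iff, Set.mem_univ, true_and]
  tauto

lemma class_eq_of_mem {S : Set (Set G)} (hpd : S.Pairwise Disjoint)
    {A B : Set G} (hA : A ∈ S) (hB : B ∈ S) {g : G} (hgA : g ∈ A) (hgB : g ∈ B) :
    A = B := by
  by_contra h
  exact Set.disjoint_left.mp (hpd hA hB h) hgA hgB

/-- The intersection of all classes containing `g` over all extent partitions of the
subcontext with object set `H`. -/
def club (H : Set G) (g : G) : Set G :=
  ⋂₀ {A | ∃ τ : Set (Set G), IsExtentPartition I H τ ∧ A ∈ τ ∧ g ∈ A}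

lemma mem_club (H : Set G) (g : G) : g ∈ club I H g := by
  rintro A ⟨τ, _, _, hg⟩
  exact hg

lemma club_subset {H : Set G} {τ : Set (Set G)} (hτ : IsExtentPartition I H τ)
    {A : Set G} (hA : A ∈ τ) {g : G} (hg : g ∈ A) : club I H g ⊆ A :=
  Set.sInter_subset_of_mem ⟨τ, hτ, hA, hg⟩

lemma cl2_base (H : Set G) : cl2 I H H = H :=
  Set.Subset.antisymm (fun _ hg => hg.1) (subset_cl2 I (le_refl H))

lemma singleton_partition {H : Set G} (hH : H.Nonempty) : IsExtentPartition I H {H} := by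
  refine ⟨?_, Set.pairwise_singleton H Disjoint, by simp, ?_⟩
  · intro A hA
    rw [Set.mem_singleton_iff] at hA
    rw [hA]; exact hH
  · intro A hA
    rw [Set.mem_singleton_iff] at hA
    rw [hA]; exact ⟨le_refl H, cl2_base I H⟩

lemma club_subset_base {H : Set G} {g : G} (hg : g ∈ H) : club I H g ⊆ H :=
  club_subset I (singleton_partition I ⟨g, hg⟩) rfl hg

lemma club_cl2 {H : Set G} {g : G} (hg : g ∈ H) : cl2 I H (club I H g) = club I H g := by
  apply Set.Subset.antisymm
  · intro x hx
    rintro A ⟨τ, hτ, hA, hgA⟩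
    have h1 : cl2 I H (club I H g) ⊆ cl2 I H A := cl2_mono I (club_subset I hτ hA hgA)
    have h2 := (hτ.2.2.2 A hA).2
    rw [← h2]
    exact h1 hx
  · exact subset_cl2 I (club_subset_base I hg)

lemma club_eq_of_mem {H : Set G} {g x : G} (hg : g ∈ H) (hx : x ∈ club I H g) :
    club I H x = club I H g := by
  have hfam : {A | ∃ τ : Set (Set G), IsExtentPartition I H τ ∧ A ∈ τ ∧ x ∈ A}
      = {A | ∃ τ : Set (Set G), IsExtentPartition I H τ ∧ A ∈ τ ∧ g ∈ A} := by
    ext A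
    constructor
    · rintro ⟨τ, hτ, hA, hxA⟩
      have hgU : g ∈ ⋃₀ τ := by rw [hτ.2.2.1]; exact hg
      obtain ⟨B, hB, hgB⟩ := Set.mem_sUnion.mp hgU
      have hxB : x ∈ B := club_subset I hτ hB hgB hx
      have hAB : A = B := class_eq_of_mem hτ.2.1 hA hB hxA hxB
      refine ⟨τ, hτ, hA, ?_⟩
      rw [hAB]; exact hgB
    · rintro ⟨τ, hτ, hA, hgA⟩
      exact ⟨τ, hτ, hA, club_subset I hτ hA hgA hx⟩
  unfold club
  rw [hfam]

lemma restrict_partition {τ : Set (Set G)} (hτ : IsExtentPartition I Set.univ τ)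
    (H : Set G) :
    IsExtentPartition I H {B | ∃ A ∈ τ, B = A ∩ H ∧ B.Nonempty} := by
  refine ⟨?_, ?_, ?_, ?_⟩
  · rintro B ⟨A, hA, rfl, hne⟩; exact hne
  · rintro B ⟨A, hA, rfl, _⟩ B' ⟨A', hA', rfl, _⟩ hne
    have hAA : A ≠ A' := by rintro rfl; exact hne rfl
    exact Set.disjoint_left.mpr fun x hx hx' =>
      Set.disjoint_left.mp (hτ.2.1 hA hA' hAA) hx.1 hx'.1
  · apply Set.Subset.antisymm
    · rintro g ⟨B, ⟨A, hA, rfl, _⟩, hgB⟩; exact hgB.2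
    · intro g hg
      have hgU : g ∈ ⋃₀ τ := by rw [hτ.2.2.1]; trivial
      obtain ⟨A, hA, hgA⟩ := Set.mem_sUnion.mp hgU
      exact Set.mem_sUnion.mpr ⟨A ∩ H, ⟨A, hA, rfl, ⟨g, hgA, hg⟩⟩, hgA, hg⟩
  · rintro B ⟨A, hA, rfl, _⟩
    refine ⟨Set.inter_subset_right, ?_⟩
    apply Set.Subset.antisymm
    · intro x hx
      have h1 : cl2 I H (A ∩ H) ⊆ cl2 I Set.univ (A ∩ H) ∩ H :=
        le_of_eq (cl2_eq_inter I H (A ∩ H))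
      have h2 := h1 hx
      refine ⟨?_, h2.2⟩
      have h3 := cl2_mono I (Set.inter_subset_left (s := A) (t := H)) h2.1
      rw [(hτ.2.2.2 A hA).2] at h3
      exact h3
    · exact subset_cl2 I Set.inter_subset_right

end Aux

/-- One-object extension of box extents. Let `H = G ∖ {z}`, let `Z = z^□□` be the class
of the finest extent partition of `(G,M,I)` containing `z`, and let `E` be a box extent
of the subcontext. Then (i) `E` is a box extent of `(G,M,I)` iff `Z ∩ E'' = ∅`, and
(ii) `E ∪ {z}` is a box extent of `(G,M,I)` iff `Z ∖ {z} ⊆ E` and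
`(E ∪ {z})'' = E ∪ {z}` (double primes computed in `(G,M,I)`). -/
theorem boxExtent_one_object_extension
    [Fintype G] [Fintype M] (I : G → M → Prop)
    (hempty : cl2 I Set.univ (∅ : Set G) = ∅)
    (z : G) (π : Set (Set G)) (hπ : IsFinestExtentPartition I Set.univ π)
    (Z : Set G) (hZ : Z ∈ π) (hzZ : z ∈ Z)
    (E : Set G) (hE : IsBoxExtent I (Set.univ \ {z}) E) :
    (IsBoxExtent I Set.univ E ↔ Z ∩ cl2 I Set.univ E = ∅) ∧
    (IsBoxExtent I Set.univ (E ∪ {z}) ↔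
      (Z \ {z} ⊆ E ∧ cl2 I Set.univ (E ∪ {z}) = E ∪ {z})) := by
  classical
  set Hs : Set G := Set.univ \ {z} with hHsdef
  have hzHs : z ∉ Hs := fun h => h.2 rfl
  have hmemHs : ∀ g : G, g ≠ z → g ∈ Hs := fun g hg => ⟨trivial, hg⟩
  obtain ⟨hπpart, hπfin⟩ := hπ
  obtain ⟨hπne, hπdisj, hπcover, hπext⟩ := hπpart
  have hπpart' : IsExtentPartition I Set.univ π := ⟨hπne, hπdisj, hπcover, hπext⟩
  have hclass : ∀ g : G, ∃ C ∈ π, g ∈ C := by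
    intro g
    have hg : g ∈ ⋃₀ π := by rw [hπcover]; trivial
    exact Set.mem_sUnion.mp hg
  -- every club lies inside the π-class of its point
  have hR : ∀ g ∈ Hs, ∀ C ∈ π, g ∈ C → club I Hs g ⊆ C := by
    intro g hg C hC hgC
    have hρ := restrict_partition I hπpart' Hs
    have h1 : club I Hs g ⊆ C ∩ Hs :=
      club_subset I hρ ⟨C, hC, rfl, ⟨g, hgC, hg⟩⟩ ⟨hgC, hg⟩
    exact h1.trans Set.inter_subset_left
  -- Claim A : if z ∈ (club g)'' then club g ⊆ Z
  have hClaimA : ∀ g ∈ Hs, z ∈ cl2 I Set.univ (club I Hs g) → club I Hs g ⊆ Z := by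
    intro g hg hz
    obtain ⟨C, hC, hgC⟩ := hclass g
    have hsub : club I Hs g ⊆ C := hR g hg C hC hgC
    have hcc : cl2 I Set.univ (club I Hs g) ⊆ C := by
      have h1 := cl2_mono I (H := Set.univ) hsub
      rwa [(hπext C hC).2] at h1
    have hCZ : C = Z := class_eq_of_mem hπdisj hC hZ (hcc hz) hzZ
    rw [← hCZ]
    exact hsub
  -- clubs disjoint from Z are extents of G
  have hDext : ∀ g ∈ Hs, club I Hs g ∩ Z = ∅ →
      cl2 I Set.univ (club I Hs g) = club I Hs g := by
    intro g hg hgZ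
    have hzn : z ∉ cl2 I Set.univ (club I Hs g) := by
      intro hzc
      have hgZ' : g ∈ club I Hs g ∩ Z :=
        ⟨mem_club I Hs g, hClaimA g hg hzc (mem_club I Hs g)⟩
      rw [hgZ] at hgZ'
      exact hgZ'
    apply Set.Subset.antisymm
    · intro x hx
      rcases eq_or_ne x z with rfl | hxz
      · exact absurd hx hzn
      · have hx2 : x ∈ cl2 I Hs (club I Hs g) := by
          rw [cl2_eq_inter]
          exact ⟨hx, hmemHs x hxz⟩
        rwa [club_cl2 I hg] at hx2
    · exact subset_cl2 I (fun x _ => trivial)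
  -- Central lemma : clubs disjoint from Z are π-classes
  have hCL : ∀ g ∈ Hs, club I Hs g ∩ Z = ∅ → club I Hs g ∈ π := by
    intro g hg hgZ
    set τs : Set (Set G) := insert Z {D | ∃ x ∈ Hs, D = club I Hs x ∧ D ∩ Z = ∅} with hτs
    have hτspart : IsExtentPartition I Set.univ τs := by
      refine ⟨?_, ?_, ?_, ?_⟩
      · rintro A hA
        rcases Set.mem_insert_iff.mp hA with rfl | ⟨x, hx, rfl, _⟩
        · exact ⟨z, hzZ⟩
        · exact ⟨x, mem_club I Hs x⟩
      · rintro A hA B hB hne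
        rw [Set.disjoint_left]
        intro a haA haB
        rcases Set.mem_insert_iff.mp hA with rfl | ⟨x, hx, rfl, hxZ⟩ <;>
          rcases Set.mem_insert_iff.mp hB with rfl | ⟨y, hy, rfl, hyZ⟩
        · exact hne rfl
        · rw [Set.eq_empty_iff_forall_notMem] at hyZ
          exact hyZ a ⟨haB, haA⟩
        · rw [Set.eq_empty_iff_forall_notMem] at hxZ
          exact hxZ a ⟨haA, haB⟩
        · have h1 := club_eq_of_mem I hx haA
          have h2 := club_eq_of_mem I hy haB
          exact hne (h1.symm.trans h2)
      · apply Set.Subset.antisymm (fun x _ => trivial)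
        intro g' _
        rcases eq_or_ne g' z with rfl | hgz
        · exact Set.mem_sUnion.mpr ⟨Z, Set.mem_insert Z _, hzZ⟩
        · have hg' : g' ∈ Hs := hmemHs g' hgz
          by_cases hcz : club I Hs g' ∩ Z = ∅
          · exact Set.mem_sUnion.mpr
              ⟨club I Hs g', Set.mem_insert_of_mem _ ⟨g', hg', rfl, hcz⟩, mem_club I Hs g'⟩
          · obtain ⟨x, hx⟩ := Set.nonempty_iff_ne_empty.mpr hcz
            have hxHs : x ∈ Hs := club_subset_base I hg' hx.1
            have h1 : club I Hs x = club I Hs g' := club_eq_of_mem I hg' hx.1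
            have h2 : club I Hs x ⊆ Z := hR x hxHs Z hZ hx.2
            have h3 : club I Hs g' ⊆ Z := by rw [← h1]; exact h2
            exact Set.mem_sUnion.mpr ⟨Z, Set.mem_insert Z _, h3 (mem_club I Hs g')⟩
      · rintro A hA
        rcases Set.mem_insert_iff.mp hA with rfl | ⟨x, hx, rfl, hxZ⟩
        · exact hπext _ hZ
        · exact ⟨fun a _ => trivial, hDext x hx hxZ⟩
    obtain ⟨S, hSπ, hSeq⟩ := hπfin τs hτspart (club I Hs g)
      (Set.mem_insert_of_mem _ ⟨g, hg, rfl, hgZ⟩)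
    have hgS : g ∈ ⋃₀ S := by rw [← hSeq]; exact mem_club I Hs g
    obtain ⟨C, hCS, hgC⟩ := Set.mem_sUnion.mp hgS
    have hCπ : C ∈ π := hSπ hCS
    have hsub : club I Hs g ⊆ C := hR g hg C hCπ hgC
    have hsup : C ⊆ club I Hs g := by
      rw [hSeq]
      exact fun a ha => Set.mem_sUnion.mpr ⟨C, hCS, ha⟩
    have heq : club I Hs g = C := Set.Subset.antisymm hsub hsup
    rw [heq]; exact hCπ
  -- facts about E
  have h0H : cl2 I Hs (∅ : Set G) = ∅ := by
    rw [cl2_eq_inter, hempty, Set.empty_inter]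
  have hEfacts : E ⊆ Hs ∧ (∀ x ∈ E, club I Hs x ⊆ E) ∧ cl2 I Hs E = E := by
    rcases hE with ⟨σ, hσ, hEσ⟩ | hE0
    · refine ⟨?_, ?_, (hσ.2.2.2 E hEσ).2⟩
      · intro x hx
        rw [← hσ.2.2.1]
        exact Set.mem_sUnion.mpr ⟨E, hEσ, hx⟩
      · intro x hx
        exact club_subset I hσ hEσ hx
    · have hE0' : E = ∅ := by rw [hE0, h0H]
      refine ⟨?_, ?_, ?_⟩ <;> simp [hE0', h0H]
  obtain ⟨hEH, hEclub, hEextH⟩ := hEfacts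
  have hzE : z ∉ E := fun h => hzHs (hEH h)
  constructor
  · -- part (i)
    constructor
    · intro hBox
      rcases hBox with ⟨τ, hτ, hmem⟩ | hBe
      · have hEext : cl2 I Set.univ E = E := (hτ.2.2.2 E hmem).2
        rw [hEext]
        by_contra hne
        obtain ⟨x, hxZ, hxE⟩ := Set.nonempty_iff_ne_empty.mpr hne
        obtain ⟨S, hSπ, hSeq⟩ := hπfin τ hτ E hmem
        have hxS : x ∈ ⋃₀ S := by rw [← hSeq]; exact hxE
        obtain ⟨C, hCS, hxC⟩ := Set.mem_sUnion.mp hxS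
        have hCZ : C = Z := class_eq_of_mem hπdisj (hSπ hCS) hZ hxC hxZ
        have hzE' : z ∈ E := by
          rw [hSeq]
          exact Set.mem_sUnion.mpr ⟨C, hCS, by rw [hCZ]; exact hzZ⟩
        exact hzE hzE'
      · simp [hBe, hempty]
    · intro hZE
      rcases eq_or_ne E ∅ with rfl | hEne
      · exact Or.inr hempty.symm
      · have hEne' : E.Nonempty := Set.nonempty_iff_ne_empty.mpr hEne
        have hEZ : Z ∩ E = ∅ := by
          rw [Set.eq_empty_iff_forall_notMem]
          intro x hx
          have hx' : x ∈ Z ∩ cl2 I Set.univ E :=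
            ⟨hx.1, subset_cl2 I (fun a _ => trivial) hx.2⟩
          rw [hZE] at hx'
          exact hx'
        have hEext : cl2 I Set.univ E = E := by
          apply Set.Subset.antisymm
          · intro x hx
            rcases eq_or_ne x z with rfl | hxz
            · exfalso
              have hx' : _ ∈ Z ∩ cl2 I Set.univ E := ⟨hzZ, hx⟩
              rw [hZE] at hx'; exact hx'
            · have hx2 : x ∈ cl2 I Hs E := by
                rw [cl2_eq_inter]; exact ⟨hx, hmemHs x hxz⟩
              rw [hEextH] at hx2; exact hx2
          · exact subset_cl2 I (fun a _ => trivial)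
        left
        refine ⟨insert E {C | C ∈ π ∧ C ∩ E = ∅}, ?_, Set.mem_insert E _⟩
        refine ⟨?_, ?_, ?_, ?_⟩
        · rintro A hA
          rcases Set.mem_insert_iff.mp hA with rfl | ⟨hCπ, _⟩
          · exact hEne'
          · exact hπne A hCπ
        · rintro A hA B hB hne
          rw [Set.disjoint_left]
          intro a haA haB
          rcases Set.mem_insert_iff.mp hA with rfl | ⟨hAπ, hAE⟩ <;>
            rcases Set.mem_insert_iff.mp hB with rfl | ⟨hBπ, hBE⟩
          · exact hne rfl
          · rw [Set.eq_empty_iff_forall_notMem] at hBE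
            exact hBE a ⟨haB, haA⟩
          · rw [Set.eq_empty_iff_forall_notMem] at hAE
            exact hAE a ⟨haA, haB⟩
          · exact Set.disjoint_left.mp (hπdisj hAπ hBπ hne) haA haB
        · apply Set.Subset.antisymm (fun x _ => trivial)
          intro g' _
          by_cases hgE : g' ∈ E
          · exact Set.mem_sUnion.mpr ⟨E, Set.mem_insert E _, hgE⟩
          · obtain ⟨C, hCπ, hgC⟩ := hclass g'
            have hCE : C ∩ E = ∅ := by
              rw [Set.eq_empty_iff_forall_notMem]
              rintro x ⟨hxC, hxE⟩
              have hxHs : x ∈ Hs := hEH hxE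
              have hCneZ : C ≠ Z := by
                intro h
                rw [h] at hxC
                have hx' : x ∈ Z ∩ E := ⟨hxC, hxE⟩
                rw [hEZ] at hx'; exact hx'
              have hclubC : club I Hs x ⊆ C := hR x hxHs C hCπ hxC
              have hclubZ : club I Hs x ∩ Z = ∅ := by
                rw [Set.eq_empty_iff_forall_notMem]
                rintro y ⟨hy1, hy2⟩
                exact hCneZ (class_eq_of_mem hπdisj hCπ hZ (hclubC hy1) hy2)
              have heq : club I Hs x = C :=
                class_eq_of_mem hπdisj (hCL x hxHs hclubZ) hCπ (mem_club I Hs x) hxC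
              have hCsubE : C ⊆ E := by rw [← heq]; exact hEclub x hxE
              exact hgE (hCsubE hgC)
            exact Set.mem_sUnion.mpr ⟨C, Set.mem_insert_of_mem _ ⟨hCπ, hCE⟩, hgC⟩
        · rintro A hA
          rcases Set.mem_insert_iff.mp hA with rfl | ⟨hAπ, _⟩
          · exact ⟨fun a _ => trivial, hEext⟩
          · exact hπext A hAπ
  · -- part (ii)
    constructor
    · intro hBox
      rcases hBox with ⟨τ, hτ, hmem⟩ | hBe
      · refine ⟨?_, (hτ.2.2.2 _ hmem).2⟩
        obtain ⟨S, hSπ, hSeq⟩ := hπfin τ hτ _ hmem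
        have hz' : z ∈ ⋃₀ S := by rw [← hSeq]; exact Set.mem_union_right _ rfl
        obtain ⟨C, hCS, hzC⟩ := Set.mem_sUnion.mp hz'
        have hCZ : C = Z := class_eq_of_mem hπdisj (hSπ hCS) hZ hzC hzZ
        intro x hx
        have hxU : x ∈ E ∪ {z} := by
          rw [hSeq]
          exact Set.mem_sUnion.mpr ⟨C, hCS, by rw [hCZ]; exact hx.1⟩
        rcases hxU with hxE | hxz
        · exact hxE
        · exact absurd hxz hx.2
      · exfalso
        have hz' : z ∈ cl2 I Set.univ (∅ : Set G) := by
          rw [← hBe]; exact Set.mem_union_right _ rfl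
        rw [hempty] at hz'
        exact hz'
    · rintro ⟨hZsub, hclosed⟩
      left
      refine ⟨insert (E ∪ {z}) {C | C ∈ π ∧ C ∩ (E ∪ {z}) = ∅}, ?_, Set.mem_insert _ _⟩
      refine ⟨?_, ?_, ?_, ?_⟩
      · rintro A hA
        rcases Set.mem_insert_iff.mp hA with rfl | ⟨hCπ, _⟩
        · exact ⟨z, Set.mem_union_right _ rfl⟩
        · exact hπne A hCπ
      · rintro A hA B hB hne
        rw [Set.disjoint_left]
        intro a haA haB
        rcases Set.mem_insert_iff.mp hA with rfl | ⟨hAπ, hAE⟩ <;>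
          rcases Set.mem_insert_iff.mp hB with rfl | ⟨hBπ, hBE⟩
        · exact hne rfl
        · rw [Set.eq_empty_iff_forall_notMem] at hBE
          exact hBE a ⟨haB, haA⟩
        · rw [Set.eq_empty_iff_forall_notMem] at hAE
          exact hAE a ⟨haA, haB⟩
        · exact Set.disjoint_left.mp (hπdisj hAπ hBπ hne) haA haB
      · apply Set.Subset.antisymm (fun x _ => trivial)
        intro g' _
        by_cases hgU : g' ∈ E ∪ {z}
        · exact Set.mem_sUnion.mpr ⟨E ∪ {z}, Set.mem_insert _ _, hgU⟩
        · obtain ⟨C, hCπ, hgC⟩ := hclass g'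
          have hgz : g' ≠ z := fun h => hgU (Set.mem_union_right _ h)
          have hCneZ : C ≠ Z := by
            intro h
            rw [h] at hgC
            exact hgU (Set.mem_union_left _ (hZsub ⟨hgC, hgz⟩))
          have hCU : C ∩ (E ∪ {z}) = ∅ := by
            rw [Set.eq_empty_iff_forall_notMem]
            rintro x ⟨hxC, hxU⟩
            rcases hxU with hxE | hxz
            · have hxHs : x ∈ Hs := hEH hxE
              have hclubC : club I Hs x ⊆ C := hR x hxHs C hCπ hxC
              have hclubZ : club I Hs x ∩ Z = ∅ := by
                rw [Set.eq_empty_iff_forall_notMem]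
                rintro y ⟨hy1, hy2⟩
                exact hCneZ (class_eq_of_mem hπdisj hCπ hZ (hclubC hy1) hy2)
              have heq : club I Hs x = C :=
                class_eq_of_mem hπdisj (hCL x hxHs hclubZ) hCπ (mem_club I Hs x) hxC
              have hCsubE : C ⊆ E := by rw [← heq]; exact hEclub x hxE
              exact hgU (Set.mem_union_left _ (hCsubE hgC))
            · have hxz' : x = z := hxz
              rw [hxz'] at hxC
              exact hCneZ (class_eq_of_mem hπdisj hCπ hZ hxC hzZ)
          exact Set.mem_sUnion.mpr ⟨C, Set.mem_insert_of_mem _ ⟨hCπ, hCU⟩, hgC⟩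
      · rintro A hA
        rcases Set.mem_insert_iff.mp hA with rfl | ⟨hAπ, _⟩
        · exact ⟨fun a _ => trivial, hclosed⟩
        · exact hπext A hAπ
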